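/- For m ≥ 2 the shift σ on Σ = ℤ → Fin m has a nonperiodic Poisson stable point: there exists s ∈ Σ which is not periodic (σⁿ s ≠ s for all n ≥ 1) but is recurrent, i.e., there is a sequence nⱼ → ∞ with d(σ^{nⱼ} s, s) → 0. -/

import Mathlib

open Filter Topology

/-- The shift map on bi-infinite sequences: (shift s) k = s (k+1). -/
def shift (m : ℕ) (s : ℤ → Fin m) : ℤ → Fin m := fun k => s (k + 1)

/-- The metric d(s,t) = ∑_{k} 2^{-|k|} · δ(s k, t k). -/
noncomputable def dSig (m : ℕ) (s t : ℤ → Fin m) : ℝ :=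
  ∑' k : ℤ, (2 : ℝ) ^ (-|k|) * (if s k = t k then 0 else 1)

/-!
The point is the Toeplitz sequence `s k = [v₂(k) is even]`. Adding `4 ^ N` does not change
`v₂(k)` when `0 < |k| < 4 ^ N`, and `v₂(4 ^ N) = 2N` is even, so `σ^(4^N) s` agrees with `s` on
`|k| < 4 ^ N`; hence `σ^(4^N) s → s`. A period `n` is impossible because `v₂(n)` and
`v₂(2n) = v₂(n) + 1` would both have to be even, as `s n = s 0` and `s (2n) = s n`.
-/

section Valuation

variable {p : ℕ} [Fact p.Prime]

lemma padicValInt_add_eq_of_dvd {a b : ℤ} (ha : a ≠ 0)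
    (hb : (p : ℤ) ^ (padicValInt p a + 1) ∣ b) : padicValInt p (a + b) = padicValInt p a := by
  have not_dvd : ¬ (p : ℤ) ^ (padicValInt p a + 1) ∣ a := by
    rw [padicValInt_dvd_iff]; omega
  have hab : a + b ≠ 0 := fun h => not_dvd (by simpa [eq_neg_of_add_eq_zero_left h] using hb)
  apply le_antisymm
  · by_contra! hlt
    have : (p : ℤ) ^ (padicValInt p a + 1) ∣ a + b := (padicValInt_dvd_iff _ _).2 (.inr hlt)
    exact not_dvd (by simpa using dvd_sub this hb)
  · have hle : padicValInt p a ≤ padicValInt p a + 1 := Nat.le_succ _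
    have := dvd_add (padicValInt_dvd a) ((pow_dvd_pow _ hle).trans hb)
    exact ((padicValInt_dvd_iff _ _).1 this).resolve_left hab

lemma padicValInt_lt_of_abs_lt_pow {k : ℤ} {N : ℕ} (hk : k ≠ 0) (hkN : |k| < (p : ℤ) ^ N) :
    padicValInt p k < N := by
  have hle : (p : ℤ) ^ padicValInt p k ≤ |k| :=
    Int.le_of_dvd (abs_pos.2 hk) ((dvd_abs _ _).2 (padicValInt_dvd k))
  exact (pow_lt_pow_iff_right₀ (by exact_mod_cast (Fact.out : p.Prime).one_lt)).1
    (hle.trans_lt hkN)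

lemma padicValInt_add_pow_of_abs_lt {k : ℤ} {N : ℕ} (hk : k ≠ 0) (hkN : |k| < (p : ℤ) ^ N) :
    padicValInt p (k + (p : ℤ) ^ N) = padicValInt p k :=
  padicValInt_add_eq_of_dvd hk (pow_dvd_pow _ (padicValInt_lt_of_abs_lt_pow hk hkN))

end Valuation

lemma even_padicValInt_add_four_pow_iff {k : ℤ} {N : ℕ} (hkN : |k| < 4 ^ N) :
    Even (padicValInt 2 (k + 4 ^ N)) ↔ Even (padicValInt 2 k) := by
  have h4 : (4 : ℤ) ^ N = ((2 : ℕ) : ℤ) ^ (2 * N) := by rw [pow_mul]; norm_num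
  rcases eq_or_ne k 0 with rfl | hk
  · rw [zero_add, h4, ← Nat.cast_pow, padicValInt.of_nat, padicValNat.prime_pow]
    simp
  · rw [h4] at hkN ⊢
    rw [padicValInt_add_pow_of_abs_lt hk hkN]

lemma exists_not_even_padicValInt_add_iff {n : ℤ} (hn : n ≠ 0) :
    ∃ k, ¬ (Even (padicValInt 2 (k + n)) ↔ Even (padicValInt 2 k)) := by
  by_contra! h
  have hn_even : Even (padicValInt 2 n) := by simpa using h 0
  have h2n : padicValInt 2 (n + n) = padicValInt 2 n + 1 := by
    rw [← mul_two]; exact_mod_cast padicValInt_mul_eq_succ (p := 2) n hn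
  have := h n
  rw [h2n, Nat.even_add_one] at this
  exact not_iff_self this

section Shift

variable {m : ℕ}

lemma shift_iterate_apply (s : ℤ → Fin m) (n : ℕ) (k : ℤ) :
    (shift m)^[n] s k = s (k + n) := by
  induction n generalizing k with
  | zero => simp
  | succ n ih =>
    rw [Function.iterate_succ_apply', shift, ih]
    push_cast
    ring_nf

lemma summable_two_zpow_neg_abs : Summable fun k : ℤ => (2 : ℝ) ^ (-|k|) := by
  have hgeom : Summable fun n : ℕ => (2 : ℝ)⁻¹ ^ n :=
    summable_geometric_of_lt_one (by norm_num) (by norm_num)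
  apply Summable.of_nat_of_neg <;> simpa using hgeom

lemma tendsto_dSig_of_eventually_eq {ι : Type*} {l : Filter ι} {t : ι → ℤ → Fin m}
    {s : ℤ → Fin m} (h : ∀ k, ∀ᶠ i in l, t i k = s k) :
    Tendsto (fun i => dSig m (t i) s) l (𝓝 0) := by
  have := tendsto_tsum_of_dominated_convergence (g := fun _ => (0 : ℝ))
    (f := fun i k => (2 : ℝ) ^ (-|k|) * if t i k = s k then 0 else 1)
    summable_two_zpow_neg_abs
    (fun k => tendsto_const_nhds.congr' ((h k).mono fun i hi => by simp [hi]))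
    (.of_forall fun i k => by split_ifs <;> simp [zpow_nonneg])
  simpa [dSig] using this

end Shift

/-- At `k = 0` the junk value `padicValInt 2 0 = 0` gives the symbol `1`, the value forced by
`v₂(4 ^ N)` being even. -/
def evenValuationPoint (m : ℕ) (hm : 2 ≤ m) (k : ℤ) : Fin m :=
  Fin.castLE hm (if Even (padicValInt 2 k) then 1 else 0)

lemma evenValuationPoint_eq_iff {m : ℕ} {hm : 2 ≤ m} {a b : ℤ} :
    evenValuationPoint m hm a = evenValuationPoint m hm b ↔
      (Even (padicValInt 2 a) ↔ Even (padicValInt 2 b)) := by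
  rw [evenValuationPoint, evenValuationPoint, (Fin.castLE_injective hm).eq_iff]
  split_ifs with ha hb hb <;> simp [ha, hb]

/-- A nonperiodic Poisson stable (recurrent) point of the shift. -/
theorem poisson_stable_point (m : ℕ) (hm : 2 ≤ m) :
    ∃ s : ℤ → Fin m,
      (∀ n : ℕ, 1 ≤ n → (shift m)^[n] s ≠ s) ∧
      ∃ nj : ℕ → ℕ, Filter.Tendsto nj Filter.atTop Filter.atTop ∧
        Filter.Tendsto (fun j => dSig m ((shift m)^[nj j] s) s) Filter.atTop (nhds 0) := by
  refine ⟨evenValuationPoint m hm, fun n hn hper => ?_, (4 ^ ·),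
    tendsto_pow_atTop_atTop_of_one_lt (by norm_num), tendsto_dSig_of_eventually_eq fun k => ?_⟩
  · obtain ⟨k, hk⟩ := exists_not_even_padicValInt_add_iff (n := n) (by omega)
    have := congrFun hper k
    rw [shift_iterate_apply, evenValuationPoint_eq_iff] at this
    exact hk this
  · filter_upwards [eventually_gt_atTop k.natAbs] with j hj
    have hkj : |k| < 4 ^ j := by
      rw [Int.abs_eq_natAbs]
      exact_mod_cast hj.trans (Nat.lt_pow_self (by norm_num))
    rw [shift_iterate_apply, evenValuationPoint_eq_iff]
    push_cast
    exact even_padicValInt_add_four_pow_iff hkj
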